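/- arXiv:2404.17303 — 2 statements merged into one kernel-verified Lean document; each statement's English description precedes it below -/
import Mathlib

section
/- Let π : H → B be a partial representation of a Hopf algebra H on a unital algebra B, and for h ∈ H write ε^π_h := π(h₍₁₎)π(S(h₍₂₎)) ∈ B. Then for every h ∈ H one has ε^π_h = ε^π_{h₍₁₎} ε^π_{h₍₂₎}. -/
/-!
In the convolution algebra of linear maps `H → B`, `ε^π = π ⋆ (π ∘ S)`. Axiom (PR3), read through
coassociativity, says `ε^π ⋆ π = π ⋆ (π ∘ (S ⋆ id))`, and `S ⋆ id` is the convolution unit, which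
`π` preserves since `π 1 = 1`; so `ε^π ⋆ π = π`. Hence
`ε^π ⋆ ε^π = (ε^π ⋆ π) ⋆ (π ∘ S) = π ⋆ (π ∘ S) = ε^π`.
-/

open TensorProduct

noncomputable section

variable {k : Type*} [Field k]
variable {H : Type*} [Ring H] [HopfAlgebra k H]
variable {B : Type*} [Ring B] [Algebra k B]

/-- The map `h ↦ ε^π_h = π(h₍₁₎)π(S(h₍₂₎))`, as a linear map `H →ₗ[k] B`. -/
def epsPi (π : H →ₗ[k] B) : H →ₗ[k] B :=
  LinearMap.mul' k B ∘ₗ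
    TensorProduct.map π (π ∘ₗ HopfAlgebra.antipode (R := k)) ∘ₗ Coalgebra.comul

/-- A partial representation of a Hopf algebra `H` on a unital algebra `B`. -/
structure IsPartialRep (π : H →ₗ[k] B) : Prop where
  map_one : π 1 = 1
  pr2 : ∀ h : H,
    LinearMap.mulLeft k (π h) ∘ₗ epsPi π =
      LinearMap.mul' k B ∘ₗ
        TensorProduct.map (π ∘ₗ LinearMap.mulLeft k h)
          (π ∘ₗ HopfAlgebra.antipode (R := k)) ∘ₗ Coalgebra.comul
  pr3 : ∀ g : H,
    LinearMap.mulRight k (π g) ∘ₗ epsPi π =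
      LinearMap.mul' k B ∘ₗ
        TensorProduct.map π
          (π ∘ₗ LinearMap.mulRight k g ∘ₗ HopfAlgebra.antipode (R := k)) ∘ₗ Coalgebra.comul

open Coalgebra HopfAlgebra WithConv

theorem LinearMap.comp_convOne {R C A B : Type*} [CommSemiring R] [AddCommMonoid C] [Module R C]
    [Coalgebra R C] [Semiring A] [Algebra R A] [Semiring B] [Algebra R B]
    (f : A →ₗ[R] B) (hf : f 1 = 1) :
    toConv (f ∘ₗ (1 : WithConv (C →ₗ[R] A)).ofConv) = 1 := by
  ext c
  simp [Algebra.algebraMap_eq_smul_one, hf]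

theorem toConv_epsPi (π : H →ₗ[k] B) :
    toConv (epsPi π) = toConv π * toConv (π ∘ₗ antipode k) :=
  rfl

namespace IsPartialRep

variable {π : H →ₗ[k] B}

theorem epsPi_mul_apply (hπ : IsPartialRep π) {x : H} {ι : Type*} (r : Repr k x ι) (g : H) :
    epsPi π x * π g = ∑ i ∈ r.index, π (r.left i) * π (antipode k (r.right i) * g) := by
  simpa [← r.eq] using LinearMap.congr_fun (hπ.pr3 g) x

theorem toConv_epsPi_mul_toConv (hπ : IsPartialRep π) :
    toConv (epsPi π) * toConv π =
      toConv π *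
        toConv (π ∘ₗ (toConv (antipode k) * toConv (LinearMap.id : H →ₗ[k] H)).ofConv) := by
  ext h
  let r := ℛ k h
  let F : H ⊗[k] (H ⊗[k] H) →ₗ[k] B :=
    LinearMap.mul' k B ∘ₗ TensorProduct.map π (π ∘ₗ LinearMap.mul' k H ∘ₗ (antipode k).rTensor H)
  have coassoc := congr(F $(sum_tmul_tmul_eq r (fun i ↦ ℛ k (r.left i)) (fun i ↦ ℛ k (r.right i))))
  simp only [map_sum, F, LinearMap.comp_apply, TensorProduct.map_tmul, LinearMap.rTensor_tmul,
    LinearMap.mul'_apply] at coassoc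
  rw [r.convMul_apply, r.convMul_apply]
  simp only [epsPi_mul_apply hπ (ℛ k _), coassoc, LinearMap.comp_apply, (ℛ k _).convMul_apply,
    map_sum, Finset.mul_sum, LinearMap.id_apply]

theorem toConv_epsPi_mul_toConv_self (hπ : IsPartialRep π) :
    toConv (epsPi π) * toConv π = toConv π := by
  rw [toConv_epsPi_mul_toConv hπ, LinearMap.antipode_mul_id, LinearMap.comp_convOne π hπ.map_one,
    mul_one]

theorem isIdempotentElem_toConv_epsPi (hπ : IsPartialRep π) :
    IsIdempotentElem (toConv (epsPi π)) := by
  rw [IsIdempotentElem]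
  nth_rw 2 [toConv_epsPi]
  rw [← mul_assoc, toConv_epsPi_mul_toConv_self hπ, toConv_epsPi]

end IsPartialRep

/-- for a partial representation `π`, one has
`ε^π_h = ε^π_{h₍₁₎} ε^π_{h₍₂₎}` for every `h ∈ H` (as an equality of linear maps in `h`). -/
theorem epsPi_eq_mul_epsPi_epsPi (π : H →ₗ[k] B) (hπ : IsPartialRep π) :
    epsPi π =
      LinearMap.mul' k B ∘ₗ TensorProduct.map (epsPi π) (epsPi π) ∘ₗ Coalgebra.comul :=
  congr(ofConv $(hπ.isIdempotentElem_toConv_epsPi)).symm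
end
end

section
/- Let π : H → B be a partial representation of a Hopf algebra H on a unital algebra B. Then π is a global representation (i.e. an algebra homomorphism) if and only if π(h₍₁₎)π(S(h₍₂₎)) = ε(h)1_B for all h ∈ H. -/
/-!
If π is multiplicative, applying it to `h₍₁₎S(h₍₂₎) = ε(h)1` gives `ε^π = ε`. Conversely, for any
partial representation (PR3) and coassociativity give
`ε^π(g₍₁₎)π(g₍₂₎h) = π(g₍₁₎)π(S(g₍₂₎)g₍₃₎h) = π(g)π(h)`, and the left side is `π(gh)` once `ε^π = ε`.
-/

open TensorProduct

noncomputable section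

variable {k : Type*} [Field k]
variable {H : Type*} [Ring H] [HopfAlgebra k H]
variable {B : Type*} [Ring B] [Algebra k B]

open Coalgebra HopfAlgebra

theorem Coalgebra.sum_counit_right_smul {R A : Type*} [CommSemiring R] [AddCommMonoid A]
    [Module R A] [Coalgebra R A] {a : A} {ι : Type*} (r : Repr R a ι) :
    ∑ i ∈ r.index, counit (R := R) (r.right i) • r.left i = a := by
  simpa only [map_sum, TensorProduct.lift.tmul, LinearMap.flip_apply, LinearMap.lsmul_apply,
    one_smul] using congr(TensorProduct.lift (LinearMap.lsmul R A).flip $(sum_tmul_counit_eq r))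

theorem epsPi_apply_of_repr (π : H →ₗ[k] B) {x : H} {ι : Type*} (r : Repr k x ι) :
    epsPi π x = ∑ i ∈ r.index, π (r.left i) * π (antipode k (r.right i)) := by
  simp only [epsPi, LinearMap.comp_apply, ← r.eq, map_sum, TensorProduct.map_tmul,
    LinearMap.mul'_apply]

theorem epsPi_apply_of_map_mul (π : H →ₗ[k] B) (h_one : π 1 = 1)
    (h_mul : ∀ g h : H, π (g * h) = π g * π h) (h : H) :
    epsPi π h = algebraMap k B (counit h) := by
  let r := Repr.arbitrary k h
  calc epsPi π h
      = π (∑ i ∈ r.index, r.left i * antipode k (r.right i)) := by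
        simp only [epsPi_apply_of_repr π r, map_sum, h_mul]
    _ = algebraMap k B (counit h) := by
        rw [sum_mul_antipode_eq_smul, map_smul, h_one, Algebra.algebraMap_eq_smul_one]

namespace IsPartialRep

variable {π : H →ₗ[k] B}

theorem epsPi_mul (hπ : IsPartialRep π) {x : H} {ι : Type*} (r : Repr k x ι) (y : H) :
    epsPi π x * π y = ∑ i ∈ r.index, π (r.left i) * π (antipode k (r.right i) * y) := by
  simpa only [LinearMap.comp_apply, LinearMap.mulRight_apply, ← r.eq, map_sum,
    TensorProduct.map_tmul, LinearMap.mul'_apply] using LinearMap.congr_fun (hπ.pr3 y) x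

theorem sum_epsPi_mul (hπ : IsPartialRep π) {g : H} {ι : Type*} (r : Repr k g ι) (h : H) :
    ∑ i ∈ r.index, epsPi π (r.left i) * π (r.right i * h) = π g * π h := by
  let r₁ := fun i => Repr.arbitrary k (r.left i)
  let r₂ := fun i => Repr.arbitrary k (r.right i)
  let T : H ⊗[k] (H ⊗[k] H) →ₗ[k] B :=
    LinearMap.mul' k B ∘ₗ TensorProduct.map π
      (π ∘ₗ LinearMap.mulRight k h ∘ₗ LinearMap.mul' k H ∘ₗ TensorProduct.map (antipode k) .id)
  have hT (x y z : H) : T (x ⊗ₜ (y ⊗ₜ z)) = π x * π (antipode k y * z * h) := by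
    simp [T]
  have coassoc := congrArg T (sum_tmul_tmul_eq r r₁ r₂)
  simp only [map_sum, hT] at coassoc
  have antipode_cancel (i : ι) :
      ∑ j ∈ (r₂ i).index, π (antipode k ((r₂ i).left j) * (r₂ i).right j * h) =
        counit (R := k) (r.right i) • π h := by
    rw [← map_sum, ← Finset.sum_mul, sum_antipode_mul_eq_smul, smul_one_mul, map_smul]
  calc ∑ i ∈ r.index, epsPi π (r.left i) * π (r.right i * h)
      = ∑ i ∈ r.index, ∑ j ∈ (r₁ i).index,
          π ((r₁ i).left j) * π (antipode k ((r₁ i).right j) * r.right i * h) := by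
        simp only [hπ.epsPi_mul (r₁ _), mul_assoc]
    _ = ∑ i ∈ r.index, counit (R := k) (r.right i) • π (r.left i) * π h := by
        simp only [coassoc, ← Finset.mul_sum, antipode_cancel, mul_smul_comm, smul_mul_assoc]
    _ = π g * π h := by
        simp only [← Finset.sum_mul, ← map_smul, ← map_sum, sum_counit_right_smul]

end IsPartialRep

/-- a partial representation `π : H → B` is a global representation
(an algebra homomorphism) if and only if `π(h₍₁₎)π(S(h₍₂₎)) = ε(h)1_B` for all `h ∈ H`. -/
theorem partialRep_global_iff (π : H →ₗ[k] B) (hπ : IsPartialRep π) :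
    (∀ g h : H, π (g * h) = π g * π h) ↔
      ∀ h : H, epsPi π h = algebraMap k B (Coalgebra.counit h) := by
  refine ⟨epsPi_apply_of_map_mul π hπ.map_one, fun heps g h => ?_⟩
  let r := Repr.arbitrary k g
  calc π (g * h)
      = ∑ i ∈ r.index, counit (R := k) (r.left i) • π (r.right i * h) := by
        simp only [← map_smul, ← smul_mul_assoc, ← map_sum, ← Finset.sum_mul, sum_counit_smul]
    _ = π g * π h := by
        simp only [← hπ.sum_epsPi_mul r h, heps, Algebra.smul_def]
end
end
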